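/- Let N ∈ ℝ^{r×r} be symmetric positive definite, ε ∈ {−1,+1}^r, and set M = P N Pᵀ and sample labels y_i = ε_{τ(i)}. Then: (i) the unique minimizer c of D_M over [0,1]^n is block-constant, that is c_i = θ_{τ(i)} for some θ ∈ (0,1)^r; and (ii) for every a ∈ {1,…,r}, with m_a = (N_{a,τ(i)})_{i=1}^n, one has (1/(λn))·m_aᵀ(y⊙c) = g_a, where g ∈ ℝ^r is the unique minimizer of Φ_{p̂,λ} with weights p̂ and labels ε. -/

import Mathlib

/-!
At a minimizer `c` of `D_M` over the box, each coordinate `t = cᵢ` minimizes `φ(t)/n` plus a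
quadratic in `t`. Since `φ` has slope `∓∞` at `0` and `1`, the minimizer is interior, and
stationarity gives `cᵢ = σ(-yᵢ (M (y⊙c))ᵢ / (λn))` with `σ(z) = 1/(1 + e^{-z})`. For
`M = P N Pᵀ` the vector `M (y⊙c)` only depends on the block `τ(i)`, so `c` is block-constant,
`cᵢ = θ_{τ(i)} = σ(-ε_{τ(i)} g_{τ(i)})`, where `g` is the vector of scores. The block sums of
`y⊙c` are then `n_b ε_b θ_b`, and this is exactly the first-order condition
`p̂_b ε_b σ(-ε_b g_b) = λ (N⁻¹ g)_b` of `Φ_{p̂,λ}` at `g`; as `ℓ` is convex and `N⁻¹` positive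
definite, `Φ_{p̂,λ}` has no other minimizer.
-/

open Matrix Set Finset

/-- Binary entropy potential, with Lean's convention `Real.log 0 = 0`. -/
noncomputable def phiEnt (c : ℝ) : ℝ := c * Real.log c + (1 - c) * Real.log (1 - c)

/-- Logistic loss `ℓ(u) = log(1 + e^{−u})`. -/
noncomputable def logLoss (u : ℝ) : ℝ := Real.log (1 + Real.exp (-u))

/-- The dual objective
`D_K(c) = (1/n)·∑ᵢ φ(cᵢ) + (1/(2λn²))·(y⊙c)ᵀ K (y⊙c)`. -/
noncomputable def dualObj {n : ℕ} (lam : ℝ) (y : Fin n → ℝ)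
    (K : Matrix (Fin n) (Fin n) ℝ) (c : Fin n → ℝ) : ℝ :=
  (1 / n) * ∑ i, phiEnt (c i) +
    (1 / (2 * lam * (n : ℝ) ^ 2)) * ((fun i => y i * c i) ⬝ᵥ (K *ᵥ fun i => y i * c i))

/-- Finite-template objective
`Φ_{q,λ}(g) = ∑ₐ q_a·ℓ(ε_a·g_a) + (λ/2)·gᵀ N⁻¹ g`. -/
noncomputable def templateObj {r : ℕ} (N : Matrix (Fin r) (Fin r) ℝ)
    (ε q : Fin r → ℝ) (lam : ℝ) (g : Fin r → ℝ) : ℝ :=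
  ∑ a, q a * logLoss (ε a * g a) + (lam / 2) * (g ⬝ᵥ (N⁻¹ *ᵥ g))

lemma phiEnt_zero : phiEnt 0 = 0 := by simp [phiEnt]

lemma phiEnt_one : phiEnt 1 = 0 := by simp [phiEnt]

lemma phiEnt_one_sub (s : ℝ) : phiEnt (1 - s) = phiEnt s := by
  simp only [phiEnt, sub_sub_cancel]; ring

lemma phiEnt_le_mul_log {s : ℝ} (h0 : 0 ≤ s) (h1 : s ≤ 1) : phiEnt s ≤ s * Real.log s := by
  have : (1 - s) * Real.log (1 - s) ≤ 0 :=
    mul_nonpos_of_nonneg_of_nonpos (by linarith) (Real.log_nonpos (by linarith) (by linarith))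
  simp only [phiEnt]; linarith

lemma hasDerivAt_phiEnt {x : ℝ} (h0 : 0 < x) (h1 : x < 1) :
    HasDerivAt phiEnt (Real.log x - Real.log (1 - x)) x := by
  have h1x : 0 < 1 - x := sub_pos.2 h1
  have hsub : HasDerivAt (fun t : ℝ => 1 - t) (-1) x := by
    simpa using (hasDerivAt_id x).const_sub 1
  have hx := (hasDerivAt_id' x).mul (Real.hasDerivAt_log h0.ne')
  have hy := hsub.mul ((Real.hasDerivAt_log h1x.ne').comp x hsub)
  refine (hx.add hy).congr_deriv ?_
  simp only [Function.comp_apply]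
  field_simp
  ring

lemma exists_mem_Ioo_inv_mul_phiEnt_add_lt_zero {ν : ℝ} (hν : 0 < ν) (a b : ℝ) :
    ∃ s ∈ Ioo (0 : ℝ) 1, ν⁻¹ * phiEnt s + a * s + b * s ^ 2 < 0 := by
  set C := |a| + |b| + 1
  set s := min (1 / 2) (Real.exp (-(ν * C)))
  have hs0 : 0 < s := lt_min (by norm_num) (Real.exp_pos _)
  have hs1 : s ≤ 1 / 2 := min_le_left _ _
  have hlog : Real.log s ≤ -(ν * C) :=
    (Real.log_le_log hs0 (min_le_right _ _)).trans (Real.log_exp _).le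
  refine ⟨s, ⟨hs0, by linarith⟩, ?_⟩
  have hent : ν⁻¹ * phiEnt s ≤ -(s * C) := calc
    ν⁻¹ * phiEnt s ≤ ν⁻¹ * (s * -(ν * C)) := by
      gcongr
      exact (phiEnt_le_mul_log hs0.le (by linarith)).trans
        (mul_le_mul_of_nonneg_left hlog hs0.le)
    _ = -(s * C) := by field_simp
  have ha : a * s ≤ |a| * s := mul_le_mul_of_nonneg_right (le_abs_self a) hs0.le
  have hb : b * s ^ 2 ≤ |b| * s := calc
    b * s ^ 2 ≤ |b| * s ^ 2 := mul_le_mul_of_nonneg_right (le_abs_self b) (by positivity)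
    _ ≤ |b| * s := mul_le_mul_of_nonneg_left (by nlinarith) (abs_nonneg b)
  nlinarith

lemma mem_Ioo_of_forall_phiEnt_quadratic_nonneg {ν α β x : ℝ} (hν : 0 < ν)
    (hx : x ∈ Icc (0 : ℝ) 1)
    (hmin : ∀ t ∈ Icc (0 : ℝ) 1,
      0 ≤ ν⁻¹ * (phiEnt t - phiEnt x) + α * (t - x) + β * (t - x) ^ 2) :
    x ∈ Ioo (0 : ℝ) 1 := by
  refine ⟨hx.1.lt_of_ne ?_, hx.2.lt_of_ne ?_⟩
  · rintro rfl
    obtain ⟨s, hs, hneg⟩ := exists_mem_Ioo_inv_mul_phiEnt_add_lt_zero hν α β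
    have := hmin s (Ioo_subset_Icc_self hs)
    simp only [phiEnt_zero, sub_zero] at this
    linarith
  · rintro rfl
    obtain ⟨s, hs, hneg⟩ := exists_mem_Ioo_inv_mul_phiEnt_add_lt_zero hν (-α) β
    have := hmin (1 - s) ⟨by linarith [hs.2], by linarith [hs.1]⟩
    rw [phiEnt_one_sub, phiEnt_one] at this
    linarith [show ν⁻¹ * (phiEnt s - 0) + α * (1 - s - 1) + β * (1 - s - 1) ^ 2
      = ν⁻¹ * phiEnt s + -α * s + β * s ^ 2 by ring]

lemma eq_inv_one_add_exp_of_forall_phiEnt_quadratic_nonneg {ν α β x : ℝ} (hν : 0 < ν)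
    (hx : x ∈ Icc (0 : ℝ) 1)
    (hmin : ∀ t ∈ Icc (0 : ℝ) 1,
      0 ≤ ν⁻¹ * (phiEnt t - phiEnt x) + α * (t - x) + β * (t - x) ^ 2) :
    x = (1 + Real.exp (ν * α))⁻¹ := by
  obtain ⟨h0, h1⟩ := mem_Ioo_of_forall_phiEnt_quadratic_nonneg hν hx hmin
  set f : ℝ → ℝ := fun t => ν⁻¹ * (phiEnt t - phiEnt x) + α * (t - x) + β * (t - x) ^ 2
  have hloc : IsLocalMin f x := by
    filter_upwards [Icc_mem_nhds h0 h1] with t ht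
    simpa [f] using hmin t ht
  have hderiv : HasDerivAt f (ν⁻¹ * (Real.log x - Real.log (1 - x)) + α) x := by
    have hlin : HasDerivAt (fun t => t - x) 1 x := (hasDerivAt_id x).sub_const x
    refine ((((hasDerivAt_phiEnt h0 h1).sub_const (phiEnt x)).const_mul ν⁻¹).add
      (hlin.const_mul α)).add ((hlin.pow 2).const_mul β) |>.congr_deriv ?_
    simp
  have hlogit : Real.log x - Real.log (1 - x) = -(ν * α) := by
    have := hloc.hasDerivAt_eq_zero hderiv
    field_simp at this
    linarith
  have hexp := congrArg Real.exp hlogit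
  rw [Real.exp_sub, Real.exp_log h0, Real.exp_log (sub_pos.2 h1), Real.exp_neg,
    div_eq_iff (sub_pos.2 h1).ne'] at hexp
  have he := Real.exp_pos (ν * α)
  field_simp at hexp ⊢
  linarith

lemma inv_one_add_exp_mem_Ioo (z : ℝ) : (1 + Real.exp z)⁻¹ ∈ Ioo (0 : ℝ) 1 :=
  ⟨by positivity, inv_lt_one_of_one_lt₀ (by linarith [Real.exp_pos z])⟩

lemma hasDerivAt_logLoss (u : ℝ) : HasDerivAt logLoss (-(1 + Real.exp u)⁻¹) u := by
  have hexp : HasDerivAt (fun v => 1 + Real.exp (-v)) (-Real.exp (-u)) u := by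
    simpa using ((Real.hasDerivAt_exp (-u)).comp u (hasDerivAt_neg u)).const_add 1
  refine ((Real.hasDerivAt_log (by positivity)).comp u hexp).congr_deriv ?_
  rw [Real.exp_neg]
  field_simp
  ring

lemma convexOn_logLoss : ConvexOn ℝ univ logLoss := by
  have hderiv : deriv logLoss = fun u => -(1 + Real.exp u)⁻¹ :=
    funext fun u => (hasDerivAt_logLoss u).deriv
  refine Monotone.convexOn_univ_of_deriv (fun u => (hasDerivAt_logLoss u).differentiableAt) ?_
  rw [hderiv]
  intro u v huv
  simp only [neg_le_neg_iff]
  gcongr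

lemma logLoss_tangent_le (u v : ℝ) :
    logLoss u - (1 + Real.exp u)⁻¹ * (v - u) ≤ logLoss v := by
  have hder := hasDerivAt_logLoss u
  rcases lt_trichotomy u v with huv | rfl | hvu
  · have := convexOn_logLoss.le_slope_of_hasDerivAt (mem_univ u) (mem_univ v) huv hder
    rw [slope_def_field, le_div_iff₀ (sub_pos.2 huv)] at this
    linarith
  · simp
  · have := convexOn_logLoss.slope_le_of_hasDerivAt (mem_univ v) (mem_univ u) hvu hder
    rw [slope_def_field, div_le_iff₀ (sub_pos.2 hvu)] at this
    linarith

namespace Matrix.IsSymm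

variable {ι : Type*} [Fintype ι] {A : Matrix ι ι ℝ}

lemma dotProduct_mulVec_comm (hA : A.IsSymm) (x y : ι → ℝ) :
    x ⬝ᵥ (A *ᵥ y) = y ⬝ᵥ (A *ᵥ x) := by
  rw [dotProduct_mulVec, ← mulVec_transpose, hA.eq, dotProduct_comm]

lemma dotProduct_mulVec_add (hA : A.IsSymm) (x d : ι → ℝ) :
    (x + d) ⬝ᵥ (A *ᵥ (x + d)) =
      x ⬝ᵥ (A *ᵥ x) + 2 * (d ⬝ᵥ (A *ᵥ x)) + d ⬝ᵥ (A *ᵥ d) := by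
  rw [mulVec_add, dotProduct_add, add_dotProduct, add_dotProduct, hA.dotProduct_mulVec_comm x d]
  ring

end Matrix.IsSymm

lemma dualObj_update {n : ℕ} (lam : ℝ) (y : Fin n → ℝ) {K : Matrix (Fin n) (Fin n) ℝ}
    (hK : K.IsSymm) (c : Fin n → ℝ) (i : Fin n) (t : ℝ) :
    dualObj lam y K (Function.update c i t) = dualObj lam y K c +
      ((1 / n) * (phiEnt t - phiEnt (c i))
        + y i * (K *ᵥ fun j => y j * c j) i / (lam * n ^ 2) * (t - c i)
        + y i ^ 2 * K i i / (2 * lam * n ^ 2) * (t - c i) ^ 2) := by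
  have hent : ∑ j, phiEnt (Function.update c i t j) =
      ∑ j, phiEnt (c j) + (phiEnt t - phiEnt (c i)) := by
    rw [← Function.comp_def, Function.comp_update, Finset.sum_update_of_mem (mem_univ i),
      Finset.sum_eq_add_sum_sdiff_singleton_of_mem (mem_univ i)]
    simp only [Function.comp_def]
    ring
  have hv : (fun j => y j * Function.update c i t j) =
      (fun j => y j * c j) + Pi.single i (y i * (t - c i)) := by
    ext j
    rcases eq_or_ne j i with rfl | hj
    · simp; ring
    · simp [hj]
  simp only [dualObj]
  rw [hent, hv, hK.dotProduct_mulVec_add, single_dotProduct, single_dotProduct]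
  simp only [mulVec_single, Pi.smul_apply, col_apply, op_smul_eq_mul]
  ring

lemma IsMinOn.dualObj_eq {n : ℕ} (hn : 0 < n) {lam : ℝ} {y : Fin n → ℝ}
    {K : Matrix (Fin n) (Fin n) ℝ} (hK : K.IsSymm) {c : Fin n → ℝ}
    (hc : ∀ i, c i ∈ Icc (0 : ℝ) 1)
    (hmin : IsMinOn (dualObj lam y K) {c' | ∀ i, c' i ∈ Icc (0 : ℝ) 1} c) (i : Fin n) :
    c i = (1 + Real.exp (y i * (K *ᵥ fun j => y j * c j) i / (lam * n)))⁻¹ := by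
  have hn' : (0 : ℝ) < n := Nat.cast_pos.2 hn
  have hscale : (n : ℝ) * (y i * (K *ᵥ fun j => y j * c j) i / (lam * n ^ 2)) =
      y i * (K *ᵥ fun j => y j * c j) i / (lam * n) := by
    rw [sq, ← mul_assoc, ← div_div, mul_div_cancel₀ _ hn'.ne']
  rw [← hscale]
  refine eq_inv_one_add_exp_of_forall_phiEnt_quadratic_nonneg
    (β := y i ^ 2 * K i i / (2 * lam * n ^ 2)) hn' (hc i) fun t ht => ?_
  have hupd : Function.update c i t ∈ {c' | ∀ i, c' i ∈ Icc (0 : ℝ) 1} := by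
    intro j
    rcases eq_or_ne j i with rfl | hj
    · simpa using ht
    · simpa [hj] using hc j
  have := isMinOn_iff.1 hmin _ hupd
  rw [dualObj_update lam y hK c i t, one_div] at this
  linarith

section templateObj

variable {r : ℕ} {N : Matrix (Fin r) (Fin r) ℝ} {ε q : Fin r → ℝ} {lam : ℝ}
  {G : Fin r → ℝ}

lemma templateObj_add_le (hN : N.IsSymm) (hq : ∀ b, 0 ≤ q b)
    (hG : ∀ b, q b * ε b * (1 + Real.exp (ε b * G b))⁻¹ = lam * (N⁻¹ *ᵥ G) b)
    (g : Fin r → ℝ) :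
    templateObj N ε q lam G + lam / 2 * ((g - G) ⬝ᵥ (N⁻¹ *ᵥ (g - G))) ≤
      templateObj N ε q lam g := by
  have hloss : ∑ b, q b * logLoss (ε b * G b) - lam * ((g - G) ⬝ᵥ (N⁻¹ *ᵥ G)) ≤
      ∑ b, q b * logLoss (ε b * g b) := by
    rw [dotProduct, Finset.mul_sum, ← Finset.sum_sub_distrib]
    refine Finset.sum_le_sum fun b _ => ?_
    have := mul_le_mul_of_nonneg_left (logLoss_tangent_le (ε b * G b) (ε b * g b)) (hq b)
    rw [Pi.sub_apply, ← mul_assoc, mul_comm lam, mul_assoc, ← hG b]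
    linarith
  have hquad := hN.inv.dotProduct_mulVec_add G (g - G)
  rw [add_sub_cancel] at hquad
  simp only [templateObj]
  rw [hquad]
  linarith

lemma IsMinOn.templateObj_eq (hN : N.PosDef) (hlam : 0 < lam) (hq : ∀ b, 0 ≤ q b)
    (hG : ∀ b, q b * ε b * (1 + Real.exp (ε b * G b))⁻¹ = lam * (N⁻¹ *ᵥ G) b)
    {g : Fin r → ℝ} (hg : IsMinOn (templateObj N ε q lam) univ g) : g = G := by
  have hle := templateObj_add_le (isHermitian_iff_isSymm.1 hN.isHermitian) hq hG g
  have hmin := isMinOn_iff.1 hg G (mem_univ G)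
  by_contra hne
  have hpos := hN.inv.dotProduct_mulVec_pos (sub_ne_zero.2 hne)
  rw [star_trivial] at hpos
  nlinarith

end templateObj

lemma membership_mul_mul_transpose_apply {n r : ℕ} {τ : Fin n → Fin r}
    {P : Matrix (Fin n) (Fin r) ℝ} (hP : ∀ i b, P i b = if τ i = b then 1 else 0)
    (N : Matrix (Fin r) (Fin r) ℝ) (i j : Fin n) :
    (P * N * Pᵀ) i j = N (τ i) (τ j) := by
  simp [mul_apply, hP]

lemma dotProduct_comp_eq_mulVec_fiberwise_sum {ι κ : Type*} [Fintype ι] [Fintype κ]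
    [DecidableEq κ] (τ : ι → κ) (N : Matrix κ κ ℝ) (v : ι → ℝ) (a : κ) :
    (fun i => N a (τ i)) ⬝ᵥ v =
      (N *ᵥ fun b => ∑ i ∈ univ.filter (fun i => τ i = b), v i) a := by
  simp only [dotProduct, mulVec, Finset.mul_sum]
  rw [← Finset.sum_fiberwise univ τ]
  refine Finset.sum_congr rfl fun b _ => Finset.sum_congr rfl fun i hi => ?_
  rw [(Finset.mem_filter.1 hi).2]

section blockScore

variable {n r : ℕ}

noncomputable def blockScore (lam : ℝ) (N : Matrix (Fin r) (Fin r) ℝ) (τ : Fin n → Fin r)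
    (v : Fin n → ℝ) (a : Fin r) : ℝ :=
  1 / (lam * n) * ((fun i => N a (τ i)) ⬝ᵥ v)

lemma inv_mulVec_blockScore (lam : ℝ) {N : Matrix (Fin r) (Fin r) ℝ} (hN : IsUnit N.det)
    (τ : Fin n → Fin r) (v : Fin n → ℝ) :
    N⁻¹ *ᵥ blockScore lam N τ v =
      (1 / (lam * n)) • fun b => ∑ i ∈ univ.filter (fun i => τ i = b), v i := by
  have hG : blockScore lam N τ v =
      (1 / (lam * n)) • (N *ᵥ fun b => ∑ i ∈ univ.filter (fun i => τ i = b), v i) := by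
    ext a
    simp only [blockScore, dotProduct_comp_eq_mulVec_fiberwise_sum, Pi.smul_apply, smul_eq_mul]
  rw [hG, mulVec_smul, mulVec_mulVec, nonsing_inv_mul N hN, one_mulVec]

lemma IsMinOn.dualObj_eq_blockScore (hn : 0 < n) {lam : ℝ} {M : Matrix (Fin n) (Fin n) ℝ}
    {N : Matrix (Fin r) (Fin r) ℝ} (hN : N.IsSymm) {τ : Fin n → Fin r}
    (hM : ∀ i j, M i j = N (τ i) (τ j)) {ε : Fin r → ℝ} {y : Fin n → ℝ}
    (hy : ∀ i, y i = ε (τ i)) {c : Fin n → ℝ} (hc : ∀ i, c i ∈ Icc (0 : ℝ) 1)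
    (hmin : IsMinOn (dualObj lam y M) {c' | ∀ i, c' i ∈ Icc (0 : ℝ) 1} c) (i : Fin n) :
    c i = (1 + Real.exp (ε (τ i) * blockScore lam N τ (fun j => y j * c j) (τ i)))⁻¹ := by
  have hMsymm : M.IsSymm := IsSymm.ext fun i j => by rw [hM, hM, hN.apply]
  have hMv : (M *ᵥ fun j => y j * c j) i =
      (fun j => N (τ i) (τ j)) ⬝ᵥ fun j => y j * c j := by
    simp only [mulVec, hM]
  rw [hmin.dualObj_eq hn hMsymm hc i, hMv, hy i, blockScore]
  congr 3
  ring

lemma card_div_mul_eq_mul_inv_mulVec_blockScore {lam : ℝ} (hlam : lam ≠ 0)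
    {N : Matrix (Fin r) (Fin r) ℝ} (hN : IsUnit N.det) {τ : Fin n → Fin r}
    {ε θ : Fin r → ℝ} {v : Fin n → ℝ} (hv : ∀ i, v i = ε (τ i) * θ (τ i))
    (b : Fin r) :
    ((univ.filter (fun i => τ i = b)).card : ℝ) / n * ε b * θ b =
      lam * (N⁻¹ *ᵥ blockScore lam N τ v) b := by
  have hsum : ∑ i ∈ univ.filter (fun i => τ i = b), v i =
      (univ.filter (fun i => τ i = b)).card * (ε b * θ b) := by
    rw [← nsmul_eq_mul, ← Finset.sum_const]
    refine Finset.sum_congr rfl fun i hi => ?_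
    rw [hv, (Finset.mem_filter.1 hi).2]
  rw [inv_mulVec_blockScore lam hN, Pi.smul_apply, smul_eq_mul, hsum, ← mul_assoc, mul_one_div,
    div_mul_cancel_left₀ hlam]
  ring

end blockScore

theorem ideal_block_reduction_general
    {n r : ℕ} (hn : 0 < n) (lam : ℝ) (hlam : 0 < lam)
    (τ : Fin n → Fin r)
    (P : Matrix (Fin n) (Fin r) ℝ)
    (hP : ∀ i b, P i b = if τ i = b then 1 else 0)
    (phat : Fin r → ℝ)
    (hphat : ∀ b, phat b = ((univ.filter (fun i => τ i = b)).card : ℝ) / n)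
    (N : Matrix (Fin r) (Fin r) ℝ) (hN : N.PosDef)
    (ε : Fin r → ℝ)
    (y : Fin n → ℝ) (hy : ∀ i, y i = ε (τ i))
    (M : Matrix (Fin n) (Fin n) ℝ) (hM : M = P * N * Pᵀ)
    (c : Fin n → ℝ)
    (hc : (∀ i, c i ∈ Icc (0:ℝ) 1) ∧
      IsMinOn (dualObj lam y M) {c' | ∀ i, c' i ∈ Icc (0:ℝ) 1} c) :
    (∃ θ : Fin r → ℝ, (∀ b, θ b ∈ Ioo (0:ℝ) 1) ∧ ∀ i, c i = θ (τ i)) ∧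
    (∀ a : Fin r, ∀ g : Fin r → ℝ,
      IsMinOn (templateObj N ε phat lam) univ g →
        (1 / (lam * n)) * ((fun i => N a (τ i)) ⬝ᵥ fun i => y i * c i) = g a) := by
  have hphat_nonneg b : 0 ≤ phat b := hphat b ▸ by positivity
  have hNdet : IsUnit N.det := (isUnit_iff_isUnit_det N).1 hN.isUnit
  set G := blockScore lam N τ fun i => y i * c i
  set θ : Fin r → ℝ := fun b => (1 + Real.exp (ε b * G b))⁻¹
  have hcθ : ∀ i, c i = θ (τ i) :=
    hc.2.dualObj_eq_blockScore hn (isHermitian_iff_isSymm.1 hN.isHermitian)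
      (hM ▸ membership_mul_mul_transpose_apply hP N) hy hc.1
  have hstat b : phat b * ε b * θ b = lam * (N⁻¹ *ᵥ G) b := by
    rw [hphat]
    exact card_div_mul_eq_mul_inv_mulVec_blockScore hlam.ne' hNdet
      (fun i => by rw [hy, hcθ]) b
  refine ⟨⟨θ, fun b => inv_one_add_exp_mem_Ioo _, hcθ⟩, fun a g hg => ?_⟩
  rw [hg.templateObj_eq hN hlam hphat_nonneg hstat]
  rfl

/-- Exact ideal block reduction: for the block-constant ideal Gram matrix
`M = P N Pᵀ`, the unique dual minimizer `c` of `D_M` is block-constant with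
values in `(0,1)`, and the ideal score `(1/(λn))·m_aᵀ(y⊙c)` equals the `a`-th
coordinate of the unique minimizer of the finite-template objective `Φ_{p̂,λ}`. -/
theorem ideal_block_reduction
    {n r : ℕ} (hn : 0 < n) (hr : 0 < r) (lam : ℝ) (hlam : 0 < lam)
    (τ : Fin n → Fin r) (hτ : Function.Surjective τ)
    (P : Matrix (Fin n) (Fin r) ℝ)
    (hP : ∀ i b, P i b = if τ i = b then 1 else 0)
    (phat : Fin r → ℝ)
    (hphat : ∀ b, phat b = ((univ.filter (fun i => τ i = b)).card : ℝ) / n)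
    (N : Matrix (Fin r) (Fin r) ℝ) (hN : N.PosDef)
    (ε : Fin r → ℝ) (hε : ∀ a, ε a = 1 ∨ ε a = -1)
    (y : Fin n → ℝ) (hy : ∀ i, y i = ε (τ i))
    (M : Matrix (Fin n) (Fin n) ℝ) (hM : M = P * N * Pᵀ)
    (c : Fin n → ℝ)
    (hc : (∀ i, c i ∈ Icc (0:ℝ) 1) ∧
      IsMinOn (dualObj lam y M) {c' | ∀ i, c' i ∈ Icc (0:ℝ) 1} c) :
    (∃ θ : Fin r → ℝ, (∀ b, θ b ∈ Ioo (0:ℝ) 1) ∧ ∀ i, c i = θ (τ i)) ∧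
    (∀ a : Fin r, ∀ g : Fin r → ℝ,
      IsMinOn (templateObj N ε phat lam) univ g →
        (1 / (lam * n)) * ((fun i => N a (τ i)) ⬝ᵥ fun i => y i * c i) = g a) :=
  ideal_block_reduction_general hn lam hlam τ P hP phat hphat N hN ε y hy M hM c hc
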